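/- If a tuple w̄ ∈ W̃^𝒞 (resp. μ̄ ∈ V^𝒞) is quasi-admissible and regular, then it is admissible. -/

import Mathlib

open scoped Classical

noncomputable section

/-- A (reduced, crystallographic) root system `Φ` in the dual of a real vector space `V`,
together with a chosen coroot `α̌ ∈ V` for every root `α`. -/
structure RootSystemData (V : Type*) [AddCommGroup V] [Module ℝ V] where
  roots : Set (Module.Dual ℝ V)
  coroot : Module.Dual ℝ V → V
  finite : roots.Finite
  ne_zero : ∀ α ∈ roots, α ≠ 0
  root_coroot_two : ∀ α ∈ roots, α (coroot α) = 2
  reflect_mem : ∀ α ∈ roots, ∀ β ∈ roots, β - β (coroot α) • α ∈ roots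
  crystallographic : ∀ α ∈ roots, ∀ β ∈ roots, ∃ n : ℤ, β (coroot α) = (n : ℝ)
  reduced : ∀ α ∈ roots, ∀ c : ℝ, c • α ∈ roots → c = 1 ∨ c = -1
  span_top : Submodule.span ℝ roots = ⊤

section
variable {V : Type*} [AddCommGroup V] [Module ℝ V]

/-- The simple elements of a positive system `P`: elements which are not sums of two
elements of `P`. -/
def simplesOf (P : Set (Module.Dual ℝ V)) : Set (Module.Dual ℝ V) :=
  {α | α ∈ P ∧ ¬∃ β ∈ P, ∃ γ ∈ P, α = β + γ}

/-- The affine root `(α, n)` viewed as the affine function `x ↦ α(x) + n`. -/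
def aev (α : Module.Dual ℝ V) (n : ℤ) : V → ℝ := fun x => α x + (n : ℝ)

/-- `π : W̃ → Λ`, `w ↦ w(0)`. -/
def piL (w : Equiv.Perm V) : V := w 0

/-- Translation by `μ`, as an element of the group of permutations of `V`. -/
def transl (μ : V) : Equiv.Perm V := Equiv.addLeft μ

end

namespace RootSystemData

variable {V : Type*} [AddCommGroup V] [Module ℝ V]

variable (RS : RootSystemData V)

/-- A point is regular if it lies on no root hyperplane. -/
def IsRegularPt (x : V) : Prop := ∀ α ∈ RS.roots, α x ≠ 0

/-- Weyl chambers of `Φ`: connected components of the set of regular points,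
described by the strict sign pattern of a regular point. -/
def IsChamber (C : Set V) : Prop :=
  ∃ v, RS.IsRegularPt v ∧ C = {x | ∀ α ∈ RS.roots, 0 < α v → 0 < α x}

/-- The type `𝒞` of Weyl chambers. -/
abbrev ChamberT := {C : Set V // RS.IsChamber C}

/-- The set `Φ_C` of `C`-positive roots. -/
def pos (C : Set V) : Set (Module.Dual ℝ V) := {α | α ∈ RS.roots ∧ ∀ x ∈ C, 0 < α x}


/-- The set `Δ_C` of `C`-simple roots. -/
def simples (C : Set V) : Set (Module.Dual ℝ V) := simplesOf (RS.pos C)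

/-- The affine reflection `s_{(α,n)} : x ↦ x − (α(x)+n) • α̌`. -/
def sAff (α : Module.Dual ℝ V) (n : ℤ) : Equiv.Perm V :=
  if h : α (RS.coroot α) = 2 then
    Function.Involutive.toPerm (fun x => x - (α x + (n : ℝ)) • RS.coroot α) (by
      intro x
      simp only [map_sub, map_smul, smul_eq_mul, h]
      match_scalars <;> ring)
  else Equiv.refl V


/-- Positivity of an affine function `f` (which is required to be an affine root
`(α,n)`), relative to a positive system `P ⊂ Φ`:  `n > 0`, or `n = 0 ∧ α ∈ P`. -/
def IsPosAff (P : Set (Module.Dual ℝ V)) (f : V → ℝ) : Prop :=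
  ∃ α ∈ RS.roots, ∃ n : ℤ, f = aev α n ∧ (0 < n ∨ (n = 0 ∧ α ∈ P))

/-- The subgroup of the affine Weyl group generated by the reflections `s_{(α,n)}`
with `α ∈ Φ ∩ Φ'`. -/
def affWeylOf (Φ' : Set (Module.Dual ℝ V)) : Subgroup (Equiv.Perm V) :=
  Subgroup.closure {g | ∃ α ∈ RS.roots ∩ Φ', ∃ n : ℤ, g = RS.sAff α n}

/-- The affine Weyl group `W̃ = W ⋉ Λ`, realized as the group generated by all affine
reflections `s_{(α,n)}`. -/
def affWeyl : Subgroup (Equiv.Perm V) := RS.affWeylOf Set.univ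

/-- The finite Weyl group `W`, generated by the linear reflections `s_α = s_{(α,0)}`. -/
def weyl : Subgroup (Equiv.Perm V) :=
  Subgroup.closure {g | ∃ α ∈ RS.roots, g = RS.sAff α 0}

/-- The subgroup `W̃_α` generated by the reflections `s_{(α,n)}`, `n ∈ ℤ`. -/
def reflSubgroup (α : Module.Dual ℝ V) : Subgroup (Equiv.Perm V) :=
  Subgroup.closure {g | ∃ n : ℤ, g = RS.sAff α n}


/-- The coroot lattice `Λ ⊂ V`. -/
def corootLattice : AddSubgroup V := AddSubgroup.closure (RS.coroot '' RS.roots)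


/-- The (open) fundamental alcove `A₀ ⊂ C₀`, whose closure contains `0`. -/
def alcove (C₀ : Set V) : Set V := {x | ∀ α ∈ RS.pos C₀, 0 < α x ∧ α x < 1}

/-- `w ∈ C`, i.e. `w(A₀) ⊂ C`. -/
def MemC (C₀ : Set V) (w : Equiv.Perm V) (C : Set V) : Prop :=
  ∀ x ∈ RS.alcove C₀, w x ∈ C

/-- The inversion set of `w`: positive affine roots `f` with `w⁻¹(f) = f ∘ w`
negative. -/
def invSet (P : Set (Module.Dual ℝ V)) (w : Equiv.Perm V) : Set (V → ℝ) :=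
  {f | RS.IsPosAff P f ∧ ¬ RS.IsPosAff P (fun x => f (w x))}

/-- The length function `l` on `W̃` determined by the fundamental alcove:
the number of inversions. -/
def len (C₀ : Set V) (w : Equiv.Perm V) : ℕ := (RS.invSet (RS.pos C₀) w).ncard

/-- The (strict) Bruhat order on `W̃`: the transitive closure of
`x < s_{(α,n)} x` whenever the length increases. -/
def bruhatLT (C₀ : Set V) : Equiv.Perm V → Equiv.Perm V → Prop :=
  Relation.TransGen (fun x y =>
    (∃ α ∈ RS.roots, ∃ n : ℤ, y = RS.sAff α n * x) ∧ RS.len C₀ x < RS.len C₀ y)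

/-- The Bruhat order `≤` on `W̃`. -/
def bruhatLE (C₀ : Set V) (x y : Equiv.Perm V) : Prop := x = y ∨ RS.bruhatLT C₀ x y

/-- One step of the ordering `<_{Φ'}`:  `x = s_{(α,n)} y <_{(α,n)} y` with `α ∈ Φ'`,
i.e. `y⁻¹((α,n)) > 0` (positivity of affine roots relative to `P`). -/
def stepRel (P Φ' : Set (Module.Dual ℝ V)) (x y : Equiv.Perm V) : Prop :=
  ∃ α ∈ RS.roots ∩ Φ', ∃ n : ℤ,
    x = RS.sAff α n * y ∧ RS.IsPosAff P (fun v => aev α n (y v))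

/-- The ordering `<_{Φ'}` on `W̃` (with affine-root positivity relative to `P`). -/
def ordLT (P Φ' : Set (Module.Dual ℝ V)) : Equiv.Perm V → Equiv.Perm V → Prop :=
  Relation.TransGen (RS.stepRel P Φ')

/-- The ordering `≤_{Φ'}` on `W̃`. -/
def ordLE (P Φ' : Set (Module.Dual ℝ V)) (x y : Equiv.Perm V) : Prop :=
  x = y ∨ RS.ordLT P Φ' x y

/-- The ordering `<_{Φ'}` on `V`: `x <_{Φ'} y` iff `y − x` is a positive linear
combination of coroots `α̌` with `α ∈ Φ'`. -/
def vecLT (Φ' : Set (Module.Dual ℝ V)) (x y : V) : Prop :=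
  ∃ s : Finset (Module.Dual ℝ V), ∃ c : Module.Dual ℝ V → ℝ,
    s.Nonempty ∧ (∀ α ∈ s, α ∈ RS.roots ∩ Φ' ∧ 0 < c α) ∧
      y - x = ∑ α ∈ s, c α • RS.coroot α

/-- The ordering `≤_{Φ'}` on `V`. -/
def vecLE (Φ' : Set (Module.Dual ℝ V)) (x y : V) : Prop := x = y ∨ RS.vecLT Φ' x y

/-- `ψ` is the fundamental weight of the chamber `C` corresponding to the simple root
`α ∈ Δ_C`:  `⟨ψ, β̌⟩ = δ_{αβ}` for `β ∈ Δ_C`. -/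
def PairsIn (C : Set V) (ψ α : Module.Dual ℝ V) : Prop :=
  α ∈ RS.simples C ∧ ∀ β ∈ RS.simples C, ψ (RS.coroot β) = if β = α then 1 else 0

/-- `ψv` is the fundamental coweight of the chamber `C` corresponding to the simple
root `α ∈ Δ_C`:  `⟨β, ψv⟩ = δ_{αβ}` for `β ∈ Δ_C`. -/
def CoPairsIn (C : Set V) (α : Module.Dual ℝ V) (ψv : V) : Prop :=
  α ∈ RS.simples C ∧ ∀ β ∈ RS.simples C, β ψv = if β = α then 1 else 0

/-- `ψ ∈ Ψ_C` with corresponding fundamental coweight `ψ̌ = ψv`. -/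
def IsFundPair (C : Set V) (ψ : Module.Dual ℝ V) (ψv : V) : Prop :=
  ∃ α, RS.PairsIn C ψ α ∧ RS.CoPairsIn C α ψv

/-- `ψ ∈ Ψ_C`. -/
def IsFundWeightOf (C : Set V) (ψ : Module.Dual ℝ V) : Prop := ∃ α, RS.PairsIn C ψ α

/-- `Φ(ψ) = {α ∈ Φ : ⟨α, ψ̌⟩ ≥ 0}` (described via the coweight `ψv = ψ̌`). -/
def phiNonneg (ψv : V) : Set (Module.Dual ℝ V) := {α | α ∈ RS.roots ∧ 0 ≤ α ψv}

/-- `Φ^ψ = {α ∈ Φ : ⟨α, ψ̌⟩ = 0}` (described via the coweight `ψv = ψ̌`). -/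
def phiZero (ψv : V) : Set (Module.Dual ℝ V) := {α | α ∈ RS.roots ∧ α ψv = 0}

/-- The set `W̃_ψ` of `w ∈ W̃` with `w⁻¹(Φ̃^ψ_{>0}) ⊂ Φ̃_{>0}`; here `Φψ = Φ^ψ`,
`P` is the chosen positive system of `Φ^ψ` and `C₀` determines `Φ̃_{>0}`. -/
def WpsiSet (C₀ : Set V) (Φψ P : Set (Module.Dual ℝ V)) : Set (Equiv.Perm V) :=
  {w | ∀ α ∈ RS.roots ∩ Φψ, ∀ n : ℤ, (0 < n ∨ (n = 0 ∧ α ∈ P)) →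
      RS.IsPosAff (RS.pos C₀) (fun v => aev α n (w v))}

/-- Admissibility of a tuple `w̄ ∈ W̃^𝒞`: `w_{s_α(C)} ≤_α w_C` for all `C ∈ 𝒞`,
`α ∈ Δ_C`. -/
def AdmissibleW (C₀ : Set V) (w : RS.ChamberT → Equiv.Perm V) : Prop :=
  ∀ C : RS.ChamberT, ∀ α ∈ RS.simples C.1, ∀ C' : RS.ChamberT,
    C'.1 = ⇑(RS.sAff α 0) '' C.1 → RS.ordLE (RS.pos C₀) {α} (w C') (w C)

/-- Quasi-admissibility of a tuple `w̄ ∈ W̃^𝒞`: `w_{s_α(C)} ∈ W̃_α w_C`. -/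
def QuasiAdmissibleW (w : RS.ChamberT → Equiv.Perm V) : Prop :=
  ∀ C : RS.ChamberT, ∀ α ∈ RS.simples C.1, ∀ C' : RS.ChamberT,
    C'.1 = ⇑(RS.sAff α 0) '' C.1 → ∃ u ∈ RS.reflSubgroup α, w C' = u * w C

/-- Admissibility of a tuple `μ̄ ∈ V^𝒞`: `μ_C − μ_{s_α(C)} ∈ ℝ_{≥0} α̌`. -/
def AdmissibleV (μ : RS.ChamberT → V) : Prop :=
  ∀ C : RS.ChamberT, ∀ α ∈ RS.simples C.1, ∀ C' : RS.ChamberT,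
    C'.1 = ⇑(RS.sAff α 0) '' C.1 → ∃ c : ℝ, 0 ≤ c ∧ μ C - μ C' = c • RS.coroot α

/-- Quasi-admissibility of a tuple `μ̄ ∈ V^𝒞`: `μ_C − μ_{s_α(C)} ∈ ℝ α̌`. -/
def QuasiAdmissibleV (μ : RS.ChamberT → V) : Prop :=
  ∀ C : RS.ChamberT, ∀ α ∈ RS.simples C.1, ∀ C' : RS.ChamberT,
    C'.1 = ⇑(RS.sAff α 0) '' C.1 → ∃ c : ℝ, μ C - μ C' = c • RS.coroot α

/-- `m`-regularity of a tuple `μ̄ ∈ V^𝒞`: `⟨α, μ_C⟩ ≥ m` for every `C ∈ 𝒞` and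
`α ∈ Φ_C`. -/
def RegularVAt (m : ℝ) (μ : RS.ChamberT → V) : Prop :=
  ∀ C : RS.ChamberT, ∀ α ∈ RS.pos C.1, m ≤ α (μ C)

/-- `m`-regularity of a tuple `w̄ ∈ W̃^𝒞`. -/
def RegularWAt (m : ℝ) (w : RS.ChamberT → Equiv.Perm V) : Prop :=
  RS.RegularVAt m (fun C => piL (w C))

/-- Regularity of a tuple `μ̄ ∈ V^𝒞`. -/
def RegularV (μ : RS.ChamberT → V) : Prop := ∃ m : ℝ, 0 < m ∧ RS.RegularVAt m μ

/-- Regularity of a tuple `w̄ ∈ W̃^𝒞`. -/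
def RegularW (w : RS.ChamberT → Equiv.Perm V) : Prop := ∃ m : ℝ, 0 < m ∧ RS.RegularWAt m w

/-- `e` is the quasi-admissible tuple `ē_ψ` corresponding to the standard basis vector
`e_ψ ∈ ℤ^Ψ`:  `(ē_ψ)_C = α̌` if `α ∈ Δ_C` corresponds to `ψ ∈ Ψ_C`, and `= 0` if
`ψ ∉ Ψ_C`. -/
def IsEPsiTuple (ψ : Module.Dual ℝ V) (e : RS.ChamberT → V) : Prop :=
  ∀ C : RS.ChamberT,
    (∀ α, RS.PairsIn C.1 ψ α → e C = RS.coroot α) ∧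
      ((¬∃ α, RS.PairsIn C.1 ψ α) → e C = 0)

end RootSystemData

/-! Fix `α ∈ Δ_C` and `C' = s_α(C)`. Write `α ∘ w_C = β + a` with `β ∈ Φ`, `a ∈ ℤ`, and
`w_{C'} = u w_C` with `u ∈ W̃_α`, which is a translation by `kα̌` or a reflection `s_{(α,n)}`.
Regularity forces `α(w_C(0)) > 0 > α(w_{C'}(0))`, which pins down the sign of `k`, resp.
`a + n`. Translation by `-α̌` is a product `s_{(α,n+1)} s_{(α,n)}` of two descending
reflections, so `w_{C'}` is reached from `w_C` by a descending chain of reflections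
`s_{(α,·)}`. For vectors, `α(μ_C - μ_{C'}) = 2c` directly gives `c > 0`. -/

section

variable {V : Type*} [AddCommGroup V]

lemma transl_apply (μ v : V) : transl μ v = μ + v := rfl

lemma transl_add (μ ν : V) : transl (μ + ν) = transl μ * transl ν := Equiv.addLeft_add μ ν

end

namespace RootSystemData

variable {V : Type*} [AddCommGroup V] [Module ℝ V] (RS : RootSystemData V)

lemma sAff_apply {α : Module.Dual ℝ V} (h2 : α (RS.coroot α) = 2) (n : ℤ) (v : V) :
    RS.sAff α n v = v - (α v + n) • RS.coroot α := by
  rw [sAff, dif_pos h2]; rfl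

lemma neg_mem_roots {β : Module.Dual ℝ V} (hβ : β ∈ RS.roots) : -β ∈ RS.roots := by
  have := RS.reflect_mem β hβ β hβ
  rwa [RS.root_coroot_two β hβ, two_smul, sub_add_eq_sub_sub, sub_sub_cancel_left] at this

lemma neg_mem_pos_image_sAff {C : Set V} {α : Module.Dual ℝ V} (hα : α ∈ RS.pos C) :
    -α ∈ RS.pos (⇑(RS.sAff α 0) '' C) := by
  have h2 := RS.root_coroot_two α hα.1
  refine ⟨RS.neg_mem_roots hα.1, ?_⟩
  rintro _ ⟨y, hy, rfl⟩
  have := hα.2 y hy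
  simp only [LinearMap.neg_apply, RS.sAff_apply h2, map_sub, map_smul, smul_eq_mul, h2]
  push_cast
  linarith

lemma mem_pos_or_neg_mem_pos {C : Set V} (hC : RS.IsChamber C) {β : Module.Dual ℝ V}
    (hβ : β ∈ RS.roots) : β ∈ RS.pos C ∨ -β ∈ RS.pos C := by
  obtain ⟨v, hv, rfl⟩ := hC
  rcases (hv β hβ).lt_or_gt with hneg | hpos
  · exact Or.inr ⟨RS.neg_mem_roots hβ, fun x hx => hx (-β) (RS.neg_mem_roots hβ) (by simpa)⟩
  · exact Or.inl ⟨hβ, fun x hx => hx β hβ hpos⟩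

section Reflections

variable {α : Module.Dual ℝ V}

lemma sAff_inv (n : ℤ) : (RS.sAff α n)⁻¹ = RS.sAff α n := by
  unfold sAff
  split
  · exact Function.Involutive.toPerm_symm _
  · rfl

lemma sAff_mul_sAff (h2 : α (RS.coroot α) = 2) (n m : ℤ) :
    RS.sAff α n * RS.sAff α m = transl (((m - n : ℤ) : ℝ) • RS.coroot α) := by
  ext v
  simp only [Equiv.Perm.mul_apply, RS.sAff_apply h2, transl_apply, map_sub, map_smul,
    smul_eq_mul, h2]
  push_cast
  match_scalars <;> ring

lemma transl_mul_sAff (h2 : α (RS.coroot α) = 2) (k n : ℤ) :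
    transl ((k : ℝ) • RS.coroot α) * RS.sAff α n = RS.sAff α (n - k) := by
  ext v
  simp only [Equiv.Perm.mul_apply, RS.sAff_apply h2, transl_apply]
  push_cast
  match_scalars <;> ring

lemma sAff_mul_transl (h2 : α (RS.coroot α) = 2) (n k : ℤ) :
    RS.sAff α n * transl ((k : ℝ) • RS.coroot α) = RS.sAff α (n + k) := by
  ext v
  simp only [Equiv.Perm.mul_apply, RS.sAff_apply h2, transl_apply, map_add, map_smul,
    smul_eq_mul, h2]
  push_cast
  match_scalars <;> ring

lemma transl_zsmul_mul_transl_zsmul (k l : ℤ) :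
    transl ((k : ℝ) • RS.coroot α) * transl ((l : ℝ) • RS.coroot α) =
      transl (((k + l : ℤ) : ℝ) • RS.coroot α) := by
  rw [← transl_add, Int.cast_add, add_smul]

lemma eq_transl_or_eq_sAff_of_mem_reflSubgroup (h2 : α (RS.coroot α) = 2)
    {u : Equiv.Perm V} (hu : u ∈ RS.reflSubgroup α) :
    (∃ k : ℤ, u = transl ((k : ℝ) • RS.coroot α)) ∨ ∃ n : ℤ, u = RS.sAff α n := by
  induction hu using Subgroup.closure_induction'' with
  | mem _ hx => obtain ⟨n, rfl⟩ := hx; exact Or.inr ⟨n, rfl⟩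
  | inv_mem _ hx => obtain ⟨n, rfl⟩ := hx; exact Or.inr ⟨n, RS.sAff_inv n⟩
  | one => exact Or.inl ⟨0, by simp [transl, Equiv.addLeft_zero]⟩
  | mul x y _ _ hx hy =>
    rcases hx with ⟨k, rfl⟩ | ⟨n, rfl⟩ <;> rcases hy with ⟨l, rfl⟩ | ⟨m, rfl⟩
    · exact Or.inl ⟨k + l, RS.transl_zsmul_mul_transl_zsmul k l⟩
    · exact Or.inr ⟨m - k, RS.transl_mul_sAff h2 k m⟩
    · exact Or.inr ⟨n + l, RS.sAff_mul_transl h2 n l⟩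
    · exact Or.inl ⟨m - n, RS.sAff_mul_sAff h2 n m⟩

lemma apply_sAff_mul (h2 : α (RS.coroot α) = 2) {β : Module.Dual ℝ V} {a : ℤ}
    {h : Equiv.Perm V} (hh : ∀ v, α (h v) = β v + a) (n : ℤ) (v : V) :
    α ((RS.sAff α n * h) v) = (-β) v + ((-a - 2 * n : ℤ) : ℝ) := by
  simp only [Equiv.Perm.mul_apply, RS.sAff_apply h2, map_sub, map_smul, smul_eq_mul, h2, hh,
    LinearMap.neg_apply]
  push_cast
  ring

lemma apply_transl_mul (h2 : α (RS.coroot α) = 2) {β : Module.Dual ℝ V} {a : ℤ}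
    {h : Equiv.Perm V} (hh : ∀ v, α (h v) = β v + a) (k : ℤ) (v : V) :
    α ((transl ((k : ℝ) • RS.coroot α) * h) v) = β v + ((a + 2 * k : ℤ) : ℝ) := by
  rw [Equiv.Perm.mul_apply, transl_apply, map_add, map_smul, smul_eq_mul, h2, hh]
  push_cast
  ring

end Reflections

lemma exists_apply_eq_add_of_mem_affWeyl {g : Equiv.Perm V} (hg : g ∈ RS.affWeyl)
    {α : Module.Dual ℝ V} (hα : α ∈ RS.roots) :
    ∃ β ∈ RS.roots, ∃ k : ℤ, ∀ v, α (g v) = β v + k := by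
  induction hg using Subgroup.closure_induction'' generalizing α with
  | mem _ hx | inv_mem _ hx =>
    obtain ⟨γ, ⟨hγ, -⟩, n, rfl⟩ := hx
    obtain ⟨c, hc⟩ := RS.crystallographic γ hγ α hα
    refine ⟨α - α (RS.coroot γ) • γ, RS.reflect_mem γ hγ α hα, -n * c, fun v => ?_⟩
    simp only [RS.sAff_inv, RS.sAff_apply (RS.root_coroot_two γ hγ), map_sub, map_smul,
      smul_eq_mul, LinearMap.sub_apply, LinearMap.smul_apply, hc]
    push_cast
    ring
  | one => exact ⟨α, hα, 0, fun v => by simp⟩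
  | mul x y _ _ hx hy =>
    obtain ⟨β, hβ, k, hk⟩ := hx hα
    obtain ⟨δ, hδ, l, hl⟩ := hy hβ
    exact ⟨δ, hδ, l + k, fun v => by rw [Equiv.Perm.mul_apply, hk, hl]; push_cast; ring⟩

section Descent

variable {P : Set (Module.Dual ℝ V)} {α β : Module.Dual ℝ V} {a : ℤ} {h : Equiv.Perm V}

lemma ordLT_of_ordLT_of_ordLE {Φ' : Set (Module.Dual ℝ V)} {x y z : Equiv.Perm V}
    (hxy : RS.ordLT P Φ' x y) (hyz : RS.ordLE P Φ' y z) : RS.ordLT P Φ' x z := by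
  rcases hyz with rfl | hyz
  exacts [hxy, hxy.trans hyz]

lemma ordLT_of_ordLE_of_ordLT {Φ' : Set (Module.Dual ℝ V)} {x y z : Equiv.Perm V}
    (hxy : RS.ordLE P Φ' x y) (hyz : RS.ordLT P Φ' y z) : RS.ordLT P Φ' x z := by
  rcases hxy with rfl | hxy
  exacts [hyz, hxy.trans hyz]

lemma stepRel_sAff_mul (hα : α ∈ RS.roots) (hβ : β ∈ RS.roots)
    (hh : ∀ v, α (h v) = β v + a) {n : ℤ} (hpos : 0 < a + n ∨ (a + n = 0 ∧ β ∈ P)) :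
    RS.stepRel P {α} (RS.sAff α n * h) h := by
  refine ⟨α, ⟨hα, rfl⟩, n, rfl, β, hβ, a + n, funext fun v => ?_, hpos⟩
  simp only [aev, hh]
  push_cast
  ring

/-- Translation by `-α̌` is `s_{(α,n+1)} s_{(α,n)}`, where `n ∈ {-a, 1 - a}` is chosen
according to the sign of `β` so that both reflections descend. -/
lemma ordLT_transl_neg_coroot_mul {C₀ : Set V} (hC₀ : RS.IsChamber C₀)
    (hα : α ∈ RS.roots) (hβ : β ∈ RS.roots) (hh : ∀ v, α (h v) = β v + a) :
    RS.ordLT (RS.pos C₀) {α} (transl (-RS.coroot α) * h) h := by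
  have h2 := RS.root_coroot_two α hα
  obtain ⟨n, hfirst, hsecond⟩ : ∃ n : ℤ, (0 < a + n ∨ (a + n = 0 ∧ β ∈ RS.pos C₀)) ∧
      (0 < -a - 2 * n + (n + 1) ∨ (-a - 2 * n + (n + 1) = 0 ∧ -β ∈ RS.pos C₀)) := by
    rcases RS.mem_pos_or_neg_mem_pos hC₀ hβ with hpos | hneg
    exacts [⟨-a, Or.inr ⟨by omega, hpos⟩, Or.inl (by omega)⟩,
      ⟨1 - a, Or.inl (by omega), Or.inr ⟨by omega, hneg⟩⟩]
  have htransl : RS.sAff α (n + 1) * (RS.sAff α n * h) = transl (-RS.coroot α) * h := by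
    rw [← mul_assoc, RS.sAff_mul_sAff h2]
    congr 2
    push_cast
    rw [sub_add_cancel_left, neg_one_smul]
  rw [← htransl]
  exact .head (RS.stepRel_sAff_mul hα (RS.neg_mem_roots hβ) (RS.apply_sAff_mul h2 hh n) hsecond)
    (.single (RS.stepRel_sAff_mul hα hβ hh hfirst))

lemma ordLE_transl_mul {C₀ : Set V} (hC₀ : RS.IsChamber C₀)
    (hα : α ∈ RS.roots) (hβ : β ∈ RS.roots) (hh : ∀ v, α (h v) = β v + a) {k : ℤ} (hk : k ≤ 0) :
    RS.ordLE (RS.pos C₀) {α} (transl ((k : ℝ) • RS.coroot α) * h) h := by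
  have h2 := RS.root_coroot_two α hα
  induction k, hk using Int.leInductionDown with
  | base => left; simp [transl, Equiv.addLeft_zero]
  | pred k _ ih =>
    have hstep := RS.ordLT_transl_neg_coroot_mul hC₀ hα hβ (RS.apply_transl_mul h2 hh k)
    rw [← mul_assoc, ← transl_add,
      show -RS.coroot α + (k : ℝ) • RS.coroot α = ((k - 1 : ℤ) : ℝ) • RS.coroot α by
        push_cast; module] at hstep
    exact Or.inr (RS.ordLT_of_ordLT_of_ordLE hstep ih)

lemma ordLT_sAff_mul {C₀ : Set V} (hC₀ : RS.IsChamber C₀)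
    (hα : α ∈ RS.roots) (hβ : β ∈ RS.roots) (hh : ∀ v, α (h v) = β v + a) {n : ℤ}
    (hn : 1 ≤ a + n) : RS.ordLT (RS.pos C₀) {α} (RS.sAff α n * h) h := by
  have h2 := RS.root_coroot_two α hα
  have hfirst : RS.ordLT (RS.pos C₀) {α} (RS.sAff α (1 - a) * h) h :=
    .single (RS.stepRel_sAff_mul hα hβ hh (Or.inl (by omega)))
  have hrest := RS.ordLE_transl_mul hC₀ hα (RS.neg_mem_roots hβ) (RS.apply_sAff_mul h2 hh (1 - a))
    (show 1 - a - n ≤ 0 by omega)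
  rw [← mul_assoc, RS.transl_mul_sAff h2, sub_sub_cancel] at hrest
  exact RS.ordLT_of_ordLE_of_ordLT hrest hfirst

lemma ordLE_mul_of_mem_reflSubgroup {C₀ : Set V} (hC₀ : RS.IsChamber C₀) (hα : α ∈ RS.roots)
    (hh : h ∈ RS.affWeyl) {u : Equiv.Perm V} (hu : u ∈ RS.reflSubgroup α)
    (hpos : 0 < α (h 0)) (hneg : α ((u * h) 0) < 0) :
    RS.ordLE (RS.pos C₀) {α} (u * h) h := by
  have h2 := RS.root_coroot_two α hα
  obtain ⟨β, hβ, a, hβa⟩ := RS.exists_apply_eq_add_of_mem_affWeyl hh hα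
  have ha : 0 < a := by
    rw [hβa, map_zero, zero_add] at hpos
    exact_mod_cast hpos
  rcases RS.eq_transl_or_eq_sAff_of_mem_reflSubgroup h2 hu with ⟨k, rfl⟩ | ⟨n, rfl⟩
  · rw [RS.apply_transl_mul h2 hβa, map_zero, zero_add] at hneg
    have : a + 2 * k < 0 := by exact_mod_cast hneg
    exact RS.ordLE_transl_mul hC₀ hα hβ hβa (by omega)
  · rw [RS.apply_sAff_mul h2 hβa, map_zero, zero_add] at hneg
    have : -a - 2 * n < 0 := by exact_mod_cast hneg
    exact Or.inr (RS.ordLT_sAff_mul hC₀ hα hβ hβa (by omega))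

end Descent

lemma RegularV.pos_and_neg_of_mem_simples {μ : RS.ChamberT → V} (hμ : RS.RegularV μ)
    {C C' : RS.ChamberT} {α : Module.Dual ℝ V} (hα : α ∈ RS.simples C.1)
    (hC' : C'.1 = ⇑(RS.sAff α 0) '' C.1) : 0 < α (μ C) ∧ α (μ C') < 0 := by
  obtain ⟨m, hm, hreg⟩ := hμ
  have hneg := hreg C' (-α) (hC' ▸ RS.neg_mem_pos_image_sAff hα.1)
  rw [LinearMap.neg_apply] at hneg
  exact ⟨hm.trans_le (hreg C α hα.1), by linarith⟩

theorem admissibleW_of_quasiAdmissibleW {C₀ : Set V} (hC₀ : RS.IsChamber C₀)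
    {w : RS.ChamberT → Equiv.Perm V} (hw : ∀ C, w C ∈ RS.affWeyl)
    (hq : RS.QuasiAdmissibleW w) (hreg : RS.RegularW w) : RS.AdmissibleW C₀ w := by
  intro C α hα C' hC'
  obtain ⟨u, hu, hwC'⟩ := hq C α hα C' hC'
  obtain ⟨hpos, hneg⟩ := RegularV.pos_and_neg_of_mem_simples RS hreg hα hC'
  simp only [piL, hwC'] at hpos hneg ⊢
  exact RS.ordLE_mul_of_mem_reflSubgroup hC₀ hα.1.1 (hw C) hu hpos hneg

theorem admissibleV_of_quasiAdmissibleV {μ : RS.ChamberT → V} (hq : RS.QuasiAdmissibleV μ)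
    (hreg : RS.RegularV μ) : RS.AdmissibleV μ := by
  intro C α hα C' hC'
  obtain ⟨c, hc⟩ := hq C α hα C' hC'
  obtain ⟨hpos, hneg⟩ := RegularV.pos_and_neg_of_mem_simples RS hreg hα hC'
  have hdiff : α (μ C) - α (μ C') = c * 2 := by
    rw [← map_sub, hc, map_smul, smul_eq_mul, RS.root_coroot_two α hα.1.1]
  exact ⟨c, by linarith, hc⟩

end RootSystemData

theorem stmt10_general {V : Type*} [AddCommGroup V] [Module ℝ V]
    (RS : RootSystemData V) (C₀ : Set V) (hC₀ : RS.IsChamber C₀) :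
    (∀ w : RS.ChamberT → Equiv.Perm V, (∀ C, w C ∈ RS.affWeyl) →
      RS.QuasiAdmissibleW w → RS.RegularW w → RS.AdmissibleW C₀ w) ∧
    (∀ μ : RS.ChamberT → V,
      RS.QuasiAdmissibleV μ → RS.RegularV μ → RS.AdmissibleV μ) :=
  ⟨fun _ hw hq hreg => RS.admissibleW_of_quasiAdmissibleW hC₀ hw hq hreg,
    fun _ hq hreg => RS.admissibleV_of_quasiAdmissibleV hq hreg⟩

/-- Lemma 1.19(a): a quasi-admissible regular tuple `w̄ ∈ W̃^𝒞`
(resp. `μ̄ ∈ V^𝒞`) is admissible. -/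
theorem stmt10 {V : Type*} [AddCommGroup V] [Module ℝ V] [FiniteDimensional ℝ V]
    (RS : RootSystemData V) (C₀ : Set V) (hC₀ : RS.IsChamber C₀) :
    (∀ w : RS.ChamberT → Equiv.Perm V, (∀ C, w C ∈ RS.affWeyl) →
      RS.QuasiAdmissibleW w → RS.RegularW w → RS.AdmissibleW C₀ w) ∧
    (∀ μ : RS.ChamberT → V,
      RS.QuasiAdmissibleV μ → RS.RegularV μ → RS.AdmissibleV μ) :=
  stmt10_general RS C₀ hC₀
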